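/- Let n ≥ 1. Let a, b : ℝ² → ℝⁿ and L, N : ℝ² → ℝ^{n×n} be continuously differentiable, define F(z,x,t) = a(x,t) + L(x,t) z and G(z,x,t) = b(x,t) + N(x,t) z, set M(x,t) = L(x,t)ᵀ − L(x,t) and K(x,t) = N(x,t)ᵀ − N(x,t), and let B : ℝⁿ × ℝ² → ℝ be twice continuously differentiable. Let z : ℝ² → ℝⁿ be any differentiable function. If U, V : ℝ² → ℝⁿ are differentiable solutions of the variational equation M W_t + K W_x = [∇²_z B(z(x,t),x,t) + (∂L/∂t)(x,t) + (∂N/∂x)(x,t)] W (with W = U and W = V respectively, ∇²_z B the Hessian of B in its z arguments), then ∂/∂t ⟨M U, V⟩ + ∂/∂x ⟨K U, V⟩ = 0 at every point of ℝ². -/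

import Mathlib

open Matrix

/-!
Differentiating `⟨M U, V⟩` in `t` and `⟨K U, V⟩` in `x` by the product rule, the terms with
derivatives of `U` and `V` are replaced through the variational equation; skew-symmetry of `M`
and `K` turns the `V`-terms into `-⟨Sᵀ U, V⟩`, where `S = ∇²_z B + L_t + N_x`. What remains is
`⟨(M_t + K_x + S - Sᵀ) U, V⟩`, and `M_t + K_x = -(S - Sᵀ)` because the Hessian is symmetric.
-/

/-- Partial derivative of `f : ℝⁿ × ℝ² → ℝ` (arguments `(z, x, t)`) in the `μ`-th
component of its `z` argument, at the point `P`. -/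
noncomputable def pderZ (n : ℕ) (f : (Fin n → ℝ) × ℝ × ℝ → ℝ) (μ : Fin n)
    (P : (Fin n → ℝ) × ℝ × ℝ) : ℝ :=
  deriv (fun s => f (Function.update P.1 μ s, P.2)) (P.1 μ)

lemma HasFDerivAt.pderZ_eq {n : ℕ} {f : (Fin n → ℝ) × ℝ × ℝ → ℝ}
    {f' : ((Fin n → ℝ) × ℝ × ℝ) →L[ℝ] ℝ} {P : (Fin n → ℝ) × ℝ × ℝ}
    (hf : HasFDerivAt f f' P) (μ : Fin n) :
    pderZ n f μ P = f' (Pi.single μ 1, 0) := by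
  have hline : HasDerivAt (fun s => (Function.update P.1 μ s, P.2))
      ((Pi.single μ 1, 0) : (Fin n → ℝ) × ℝ × ℝ) (P.1 μ) :=
    (hasDerivAt_update P.1 μ _).prodMk (hasDerivAt_const _ _)
  have hP : (Function.update P.1 μ (P.1 μ), P.2) = P := by simp
  exact ((hP ▸ hf).comp_hasDerivAt _ hline).deriv

lemma pderZ_pderZ_eq_fderiv_fderiv {n : ℕ} {B : (Fin n → ℝ) × ℝ × ℝ → ℝ}
    (hB : ContDiff ℝ 2 B) (P : (Fin n → ℝ) × ℝ × ℝ) (μ ν : Fin n) :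
    pderZ n (fun Q => pderZ n B ν Q) μ P
      = fderiv ℝ (fderiv ℝ B) P (Pi.single μ 1, 0) (Pi.single ν 1, 0) := by
  have hpderZ : (fun Q => pderZ n B ν Q) = fun Q => fderiv ℝ B Q (Pi.single ν 1, 0) :=
    funext fun Q => ((hB.differentiable two_ne_zero) Q).hasFDerivAt.pderZ_eq ν
  have hfderiv : DifferentiableAt ℝ (fderiv ℝ B) P :=
    (hB.fderiv_right one_add_one_eq_two.le).differentiable one_ne_zero P
  rw [hpderZ, (hfderiv.hasFDerivAt.clm_apply (hasFDerivAt_const _ P)).pderZ_eq μ]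
  simp

lemma isSymm_pderZ_pderZ {n : ℕ} {B : (Fin n → ℝ) × ℝ × ℝ → ℝ}
    (hB : ContDiff ℝ 2 B) (P : (Fin n → ℝ) × ℝ × ℝ) :
    (Matrix.of fun μ ν => pderZ n (fun Q => pderZ n B ν Q) μ P).IsSymm := by
  ext μ ν
  simp only [transpose_apply, of_apply, pderZ_pderZ_eq_fderiv_fderiv hB]
  exact (hB.contDiffAt.isSymmSndFDerivAt (by simp)).eq _ _

section
variable {𝕜 ι : Type*} [NontriviallyNormedField 𝕜]

lemma HasDerivAt.mulVec_dotProduct [Fintype ι] {A : 𝕜 → Matrix ι ι 𝕜} {u v : 𝕜 → ι → 𝕜}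
    {A' : Matrix ι ι 𝕜} {u' v' : ι → 𝕜} {t : 𝕜}
    (hA : ∀ μ ν, HasDerivAt (fun s => A s μ ν) (A' μ ν) t)
    (hu : ∀ ν, HasDerivAt (fun s => u s ν) (u' ν) t)
    (hv : ∀ μ, HasDerivAt (fun s => v s μ) (v' μ) t) :
    HasDerivAt (fun s => (A s *ᵥ u s) ⬝ᵥ v s)
      ((A' *ᵥ u t) ⬝ᵥ v t + (A t *ᵥ u') ⬝ᵥ v t + (A t *ᵥ u t) ⬝ᵥ v') t := by
  refine (HasDerivAt.fun_sum fun μ _ =>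
    (HasDerivAt.fun_sum fun ν _ => (hA μ ν).fun_mul (hu ν)).fun_mul (hv μ)).congr_deriv ?_
  simp only [mulVec, dotProduct, Finset.sum_add_distrib, add_mul]

lemma HasDerivAt.transpose_sub_self {A : 𝕜 → Matrix ι ι 𝕜} {A' : Matrix ι ι 𝕜} {t : 𝕜}
    (hA : ∀ μ ν, HasDerivAt (fun s => A s μ ν) (A' μ ν) t) (μ ν : ι) :
    HasDerivAt (fun s => ((A s)ᵀ - A s) μ ν) ((A'ᵀ - A') μ ν) t :=
  (hA ν μ).sub (hA μ ν)

end

lemma hasDerivAt_deriv_fst_of_differentiable {E : Type*} [NormedAddCommGroup E] [NormedSpace ℝ E]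
    {f : ℝ × ℝ → E} (hf : Differentiable ℝ f) (x t : ℝ) :
    HasDerivAt (fun s : ℝ => f (s, t)) (deriv (fun s : ℝ => f (s, t)) x) x :=
  (hf.comp (differentiable_id.prodMk (differentiable_const t)) x).hasDerivAt

lemma hasDerivAt_deriv_snd_of_differentiable {E : Type*} [NormedAddCommGroup E] [NormedSpace ℝ E]
    {f : ℝ × ℝ → E} (hf : Differentiable ℝ f) (x t : ℝ) :
    HasDerivAt (fun s : ℝ => f (x, s)) (deriv (fun s : ℝ => f (x, s)) t) t :=
  (hf.comp ((differentiable_const x).prodMk differentiable_id) t).hasDerivAt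

lemma Matrix.transpose_sub_self_transpose {R ι : Type*} [AddCommGroup R] (A : Matrix ι ι R) :
    (Aᵀ - A)ᵀ = -(Aᵀ - A) := by
  rw [transpose_sub, transpose_transpose, neg_sub]

section
variable {R ι : Type*} [CommRing R] [Fintype ι]

lemma mulVec_dotProduct_eq_transpose (A : Matrix ι ι R) (u v : ι → R) :
    (A *ᵥ u) ⬝ᵥ v = (Aᵀ *ᵥ v) ⬝ᵥ u := by
  rw [dotProduct_comm, dotProduct_mulVec, ← mulVec_transpose]

lemma variational_dissipation_identity {M K S M' K' : Matrix ι ι R} {u v ut ux vt vx : ι → R}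
    (hM : Mᵀ = -M) (hK : Kᵀ = -K)
    (hu : M *ᵥ ut + K *ᵥ ux = S *ᵥ u) (hv : M *ᵥ vt + K *ᵥ vx = S *ᵥ v) :
    (M' *ᵥ u) ⬝ᵥ v + (M *ᵥ ut) ⬝ᵥ v + (M *ᵥ u) ⬝ᵥ vt
      + ((K' *ᵥ u) ⬝ᵥ v + (K *ᵥ ux) ⬝ᵥ v + (K *ᵥ u) ⬝ᵥ vx)
      = ((M' + K' + (S - Sᵀ)) *ᵥ u) ⬝ᵥ v := by
  have hU : (M *ᵥ ut) ⬝ᵥ v + (K *ᵥ ux) ⬝ᵥ v = (S *ᵥ u) ⬝ᵥ v := by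
    rw [← add_dotProduct, hu]
  have hV : (M *ᵥ u) ⬝ᵥ vt + (K *ᵥ u) ⬝ᵥ vx = -((Sᵀ *ᵥ u) ⬝ᵥ v) := by
    rw [mulVec_dotProduct_eq_transpose M, mulVec_dotProduct_eq_transpose K, hM, hK,
      neg_mulVec, neg_mulVec, neg_dotProduct, neg_dotProduct, ← neg_add, ← add_dotProduct, hv,
      mulVec_dotProduct_eq_transpose S]
  simp only [add_mulVec, sub_mulVec, add_dotProduct, sub_dotProduct]
  linear_combination hU + hV

end

theorem affine_birkhoff_dissipation_law_general (n : ℕ)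
    (a b : ℝ → ℝ → Fin n → ℝ) (L N : ℝ → ℝ → Matrix (Fin n) (Fin n) ℝ)
    (hL : ∀ μ ν : Fin n, ContDiff ℝ 1 (fun P : ℝ × ℝ => L P.1 P.2 μ ν))
    (hN : ∀ μ ν : Fin n, ContDiff ℝ 1 (fun P : ℝ × ℝ => N P.1 P.2 μ ν))
    (B : (Fin n → ℝ) × ℝ × ℝ → ℝ) (hB : ContDiff ℝ 2 B)
    (z : ℝ × ℝ → Fin n → ℝ) :
    let F : (Fin n → ℝ) → ℝ → ℝ → Fin n → ℝ := fun Z X T => a X T + L X T *ᵥ Z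
    let G : (Fin n → ℝ) → ℝ → ℝ → Fin n → ℝ := fun Z X T => b X T + N X T *ᵥ Z
    let M : ℝ → ℝ → Matrix (Fin n) (Fin n) ℝ := fun X T => (L X T)ᵀ - L X T
    let K : ℝ → ℝ → Matrix (Fin n) (Fin n) ℝ := fun X T => (N X T)ᵀ - N X T
    -- Hessian of `B` in its `z` arguments:
    let hessB : (Fin n → ℝ) × ℝ × ℝ → Matrix (Fin n) (Fin n) ℝ := fun P =>
      Matrix.of fun μ ν => pderZ n (fun Q => pderZ n B ν Q) μ P
    let Lt : ℝ → ℝ → Matrix (Fin n) (Fin n) ℝ := fun X T =>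
      Matrix.of fun μ ν => deriv (fun s => L X s μ ν) T
    let Nx : ℝ → ℝ → Matrix (Fin n) (Fin n) ℝ := fun X T =>
      Matrix.of fun μ ν => deriv (fun s => N s T μ ν) X
    ∀ U V : ℝ × ℝ → Fin n → ℝ, Differentiable ℝ U → Differentiable ℝ V →
      (∀ x t : ℝ,
        M x t *ᵥ (fun μ => deriv (fun s => U (x, s) μ) t)
          + K x t *ᵥ (fun μ => deriv (fun s => U (s, t) μ) x) =
          (hessB (z (x, t), x, t) + Lt x t + Nx x t) *ᵥ U (x, t)) →
      (∀ x t : ℝ,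
        M x t *ᵥ (fun μ => deriv (fun s => V (x, s) μ) t)
          + K x t *ᵥ (fun μ => deriv (fun s => V (s, t) μ) x) =
          (hessB (z (x, t), x, t) + Lt x t + Nx x t) *ᵥ V (x, t)) →
      ∀ x t : ℝ,
        deriv (fun s => (M x s *ᵥ U (x, s)) ⬝ᵥ V (x, s)) t
          + deriv (fun s => (K s t *ᵥ U (s, t)) ⬝ᵥ V (s, t)) x = 0 := by
  intro _ _ M K hessB Lt Nx U V hU hV hUeq hVeq x t
  have hUi (i : Fin n) := differentiable_pi.mp hU i
  have hVi (i : Fin n) := differentiable_pi.mp hV i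
  have hMt : ∀ μ ν, HasDerivAt (fun s => M x s μ ν) (((Lt x t)ᵀ - Lt x t) μ ν) t :=
    HasDerivAt.transpose_sub_self fun μ ν =>
      hasDerivAt_deriv_snd_of_differentiable ((hL μ ν).differentiable one_ne_zero) x t
  have hKx : ∀ μ ν, HasDerivAt (fun s => K s t μ ν) (((Nx x t)ᵀ - Nx x t) μ ν) x :=
    HasDerivAt.transpose_sub_self fun μ ν =>
      hasDerivAt_deriv_fst_of_differentiable ((hN μ ν).differentiable one_ne_zero) x t
  rw [(HasDerivAt.mulVec_dotProduct hMt
      (fun i => hasDerivAt_deriv_snd_of_differentiable (hUi i) x t)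
      (fun i => hasDerivAt_deriv_snd_of_differentiable (hVi i) x t)).deriv,
    (HasDerivAt.mulVec_dotProduct hKx
      (fun i => hasDerivAt_deriv_fst_of_differentiable (hUi i) x t)
      (fun i => hasDerivAt_deriv_fst_of_differentiable (hVi i) x t)).deriv,
    variational_dissipation_identity (transpose_sub_self_transpose _)
      (transpose_sub_self_transpose _) (hUeq x t) (hVeq x t)]
  have hH : (hessB (z (x, t), x, t))ᵀ = hessB (z (x, t), x, t) :=
    isSymm_pderZ_pderZ hB _
  rw [transpose_add, transpose_add, hH, ← zero_dotProduct (V (x, t)), ← zero_mulVec (U (x, t))]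
  congr 2
  abel

/-- For one-forms affine in `z`, `F(z,x,t) = a(x,t) + L(x,t)z`
and `G(z,x,t) = b(x,t) + N(x,t)z`, with `M = Lᵀ − L`, `K = Nᵀ − N` and a `C²`
Birkhoffian `B`, any two differentiable solutions `U, V` of the variational
equation `M W_t + K W_x = (∇²_z B(z(x,t),x,t) + L_t + N_x) W` along a
differentiable field `z` satisfy the multi-symplectic dissipation law
`∂_t ⟨M U, V⟩ + ∂_x ⟨K U, V⟩ = 0` at every point. -/
theorem affine_birkhoff_dissipation_law (n : ℕ) (hn : 1 ≤ n)
    (a b : ℝ → ℝ → Fin n → ℝ) (L N : ℝ → ℝ → Matrix (Fin n) (Fin n) ℝ)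
    (ha : ContDiff ℝ 1 (fun P : ℝ × ℝ => a P.1 P.2))
    (hb : ContDiff ℝ 1 (fun P : ℝ × ℝ => b P.1 P.2))
    (hL : ∀ μ ν : Fin n, ContDiff ℝ 1 (fun P : ℝ × ℝ => L P.1 P.2 μ ν))
    (hN : ∀ μ ν : Fin n, ContDiff ℝ 1 (fun P : ℝ × ℝ => N P.1 P.2 μ ν))
    (B : (Fin n → ℝ) × ℝ × ℝ → ℝ) (hB : ContDiff ℝ 2 B)
    (z : ℝ × ℝ → Fin n → ℝ) (hz : Differentiable ℝ z) :
    let F : (Fin n → ℝ) → ℝ → ℝ → Fin n → ℝ := fun Z X T => a X T + L X T *ᵥ Z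
    let G : (Fin n → ℝ) → ℝ → ℝ → Fin n → ℝ := fun Z X T => b X T + N X T *ᵥ Z
    let M : ℝ → ℝ → Matrix (Fin n) (Fin n) ℝ := fun X T => (L X T)ᵀ - L X T
    let K : ℝ → ℝ → Matrix (Fin n) (Fin n) ℝ := fun X T => (N X T)ᵀ - N X T
    -- Hessian of `B` in its `z` arguments:
    let hessB : (Fin n → ℝ) × ℝ × ℝ → Matrix (Fin n) (Fin n) ℝ := fun P =>
      Matrix.of fun μ ν => pderZ n (fun Q => pderZ n B ν Q) μ P
    let Lt : ℝ → ℝ → Matrix (Fin n) (Fin n) ℝ := fun X T =>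
      Matrix.of fun μ ν => deriv (fun s => L X s μ ν) T
    let Nx : ℝ → ℝ → Matrix (Fin n) (Fin n) ℝ := fun X T =>
      Matrix.of fun μ ν => deriv (fun s => N s T μ ν) X
    ∀ U V : ℝ × ℝ → Fin n → ℝ, Differentiable ℝ U → Differentiable ℝ V →
      (∀ x t : ℝ,
        M x t *ᵥ (fun μ => deriv (fun s => U (x, s) μ) t)
          + K x t *ᵥ (fun μ => deriv (fun s => U (s, t) μ) x) =
          (hessB (z (x, t), x, t) + Lt x t + Nx x t) *ᵥ U (x, t)) →
      (∀ x t : ℝ,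
        M x t *ᵥ (fun μ => deriv (fun s => V (x, s) μ) t)
          + K x t *ᵥ (fun μ => deriv (fun s => V (s, t) μ) x) =
          (hessB (z (x, t), x, t) + Lt x t + Nx x t) *ᵥ V (x, t)) →
      ∀ x t : ℝ,
        deriv (fun s => (M x s *ᵥ U (x, s)) ⬝ᵥ V (x, s)) t
          + deriv (fun s => (K s t *ᵥ U (s, t)) ⬝ᵥ V (s, t)) x = 0 :=
  affine_birkhoff_dissipation_law_general n a b L N hL hN B hB z
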